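/- If X is a metrizable space with 𝔠 < |X| ≤ 𝔠^{+ω}, then c(X) = |X|, where c(X) is the cellularity of X. -/

import Mathlib

open Cardinal Set TopologicalSpace

/-- A cellular family in `X`: a pairwise disjoint collection of nonempty open subsets. -/
def IsCellularFamily {X : Type*} [TopologicalSpace X] (S : Set (Set X)) : Prop :=
  (∀ U ∈ S, IsOpen U ∧ U.Nonempty) ∧ S.PairwiseDisjoint id

/-- The cellularity of `X`: the supremum of the cardinalities of cellular families in `X`. -/
noncomputable def cellularity (X : Type u) [TopologicalSpace X] : Cardinal.{u} :=
  ⨆ S : {S : Set (Set X) // IsCellularFamily S}, Cardinal.mk S.1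

/-- `𝔠^{+ω}`, the least limit cardinal above `𝔠`: the supremum of the finitely iterated
cardinal successors of `𝔠`. -/
noncomputable def contSuccOmega : Cardinal.{u} :=
  ⨆ n : ℕ, (Order.succ)^[n] Cardinal.continuum

/-- Hausdorff-style formula: `(κ⁺)^ℵ₀ = κ⁺` whenever `κ^ℵ₀ = κ`. -/
lemma succ_power_aleph0 {κ : Cardinal.{u}} (hκ : ℵ₀ ≤ κ) (h : κ ^ ℵ₀ = κ) :
    (Order.succ κ) ^ ℵ₀ = Order.succ κ := by
  refine le_antisymm ?_ (self_le_power _ (by exact_mod_cast one_le_aleph0))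
  set c := Order.succ κ with hc
  have hreg : c.IsRegular := isRegular_succ hκ
  have hκc : κ < c := Order.lt_succ κ
  have hac : ℵ₀ < c := hκ.trans_lt hκc
  have hmkT : #c.ord.ToType = c := mk_ord_toType c
  -- every countable family in T is bounded
  have hbdd : ∀ f : ULift.{u} ℕ → c.ord.ToType, ∃ b : c.ord.ToType, ∀ n, f n < b := by
    intro f
    have hlt : #(Set.range f) < Order.cof c.ord.ToType := by
      rw [Ordinal.cof_toType, hreg.cof_eq]
      exact mk_range_le.trans_lt (by simpa using hac)
    have hnc : ¬ IsCofinal (Set.range f) := fun hc => (Order.cof_le hc).not_gt hlt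
    simp only [IsCofinal] at hnc
    push_neg at hnc
    obtain ⟨b, hb⟩ := hnc
    exact ⟨b, fun n => hb _ (Set.mem_range_self n)⟩
  -- initial segments have cardinality at most κ
  have hseg : ∀ b : c.ord.ToType, #{x : c.ord.ToType // x < b} ≤ κ := by
    intro b
    exact Order.lt_succ_iff.mp (Cardinal.card_typein_toType_lt c b)
  have key : c ^ ℵ₀ ≤ c * κ := by
    have h1 : #(ULift.{u} ℕ → c.ord.ToType) = c ^ ℵ₀ := by
      rw [← power_def, hmkT]
      congr 1 <;> simp
    rw [← h1]
    have hcover : (univ : Set (ULift.{u} ℕ → c.ord.ToType)) = ⋃ b : c.ord.ToType, {f | ∀ n, f n < b} := by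
      ext f
      simp only [mem_univ, mem_iUnion, true_iff, mem_setOf_eq]
      exact hbdd f
    calc #(ULift.{u} ℕ → c.ord.ToType) = #(univ : Set (ULift.{u} ℕ → c.ord.ToType)) := mk_univ.symm
      _ = #(⋃ b : c.ord.ToType, {f : ULift.{u} ℕ → c.ord.ToType | ∀ n, f n < b}) := by rw [hcover]
      _ ≤ #c.ord.ToType * ⨆ b : c.ord.ToType, #({f : ULift.{u} ℕ → c.ord.ToType | ∀ n, f n < b}) := mk_iUnion_le _
      _ ≤ c * κ := by
          rw [hmkT]
          refine mul_le_mul_right (ciSup_le' fun b => ?_) c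
          have hinj : Function.Injective
              (fun f : {f : ULift.{u} ℕ → c.ord.ToType | ∀ n, f n < b} =>
                (fun n => (⟨f.1 n, f.2 n⟩ : {x : c.ord.ToType // x < b}))) := by
            intro f g hfg
            ext n
            exact congrArg Subtype.val (congrFun hfg n)
          calc #({f : ULift.{u} ℕ → c.ord.ToType | ∀ n, f n < b})
              ≤ #(ULift.{u} ℕ → {x : c.ord.ToType // x < b}) := mk_le_of_injective hinj
            _ = #{x : c.ord.ToType // x < b} ^ ℵ₀ := by rw [← power_def]; congr 1 <;> simp
            _ ≤ κ ^ ℵ₀ := power_le_power_right (hseg b)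
            _ = κ := h
  calc c ^ ℵ₀ ≤ c * κ := key
    _ ≤ c * c := mul_le_mul_right hκc.le c
    _ = c := mul_eq_self hac.le

lemma aleph0_le_iter (n : ℕ) : ℵ₀ ≤ (Order.succ)^[n] Cardinal.continuum := by
  induction n with
  | zero => exact aleph0_le_continuum
  | succ n ih =>
    rw [Function.iterate_succ_apply']
    exact ih.trans (Order.le_succ _)

lemma iter_power_aleph0 (n : ℕ) :
    ((Order.succ)^[n] Cardinal.continuum) ^ ℵ₀ = (Order.succ)^[n] Cardinal.continuum := by
  induction n with
  | zero =>
    simp only [Function.iterate_zero, id_eq]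
    rw [← two_power_aleph0, ← power_mul, aleph0_mul_aleph0]
  | succ n ih =>
    rw [Function.iterate_succ_apply']
    exact succ_power_aleph0 (aleph0_le_iter n) ih

lemma cellularity_le_mk (X : Type u) [TopologicalSpace X] : cellularity X ≤ #X := by
  refine ciSup_le' fun S => ?_
  have hne : ∀ U : S.1, ∃ x : X, x ∈ U.1 := fun U => (S.2.1 U.1 U.2).2
  choose f hf using hne
  have hinj : Function.Injective f := by
    intro U V h
    by_contra hne
    have hUV : U.1 ≠ V.1 := fun hc => hne (Subtype.ext hc)
    have hdis := S.2.2 U.2 V.2 hUV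
    exact (Set.disjoint_left.mp hdis (hf U) (h ▸ hf V))
  exact mk_le_of_injective hinj

lemma cellular_family_card_le {X : Type u} [TopologicalSpace X] {S : Set (Set X)}
    (hS : IsCellularFamily S) : #S ≤ cellularity X :=
  le_ciSup (f := fun S : {S : Set (Set X) // IsCellularFamily S} => #S.1)
    (Cardinal.bddAbove_range _) ⟨S, hS⟩

lemma exists_maximal_separated {X : Type u} [MetricSpace X] {ε : ℝ} (hε : 0 < ε) :
    ∃ D : Set X, (∀ x ∈ D, ∀ y ∈ D, x ≠ y → ε ≤ dist x y) ∧
      ∀ x : X, ∃ y ∈ D, dist x y < ε := by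
  have hz : ∀ c ⊆ {D : Set X | ∀ x ∈ D, ∀ y ∈ D, x ≠ y → ε ≤ dist x y},
      IsChain (· ⊆ ·) c → ∃ ub ∈ {D : Set X | ∀ x ∈ D, ∀ y ∈ D, x ≠ y → ε ≤ dist x y},
        ∀ s ∈ c, s ⊆ ub := by
    intro c hc hchain
    refine ⟨⋃₀ c, ?_, fun s hs => subset_sUnion_of_mem hs⟩
    rintro x ⟨s, hs, hxs⟩ y ⟨t, ht, hyt⟩ hxy
    rcases hchain.total hs ht with h | h
    · exact hc ht x (h hxs) y hyt hxy
    · exact hc hs x hxs y (h hyt) hxy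
  obtain ⟨D, hD⟩ := zorn_subset {D : Set X | ∀ x ∈ D, ∀ y ∈ D, x ≠ y → ε ≤ dist x y} hz
  refine ⟨D, hD.prop, fun x => ?_⟩
  by_contra hx
  push_neg at hx
  have hxD : x ∉ D := by
    intro h
    have := hx x h
    rw [dist_self] at this
    linarith
  have hins : insert x D ∈ {D : Set X | ∀ x ∈ D, ∀ y ∈ D, x ≠ y → ε ≤ dist x y} := by
    intro a ha b hb hab
    rcases ha with rfl | ha <;> rcases hb with rfl | hb
    · exact absurd rfl hab
    · exact hx b hb
    · rw [dist_comm]; exact hx a ha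
    · exact hD.prop a ha b hb hab
  have hsub : insert x D ⊆ D := hD.2 hins (Set.subset_insert x D)
  exact hxD (hsub (Set.mem_insert x D))

lemma separated_card_le {X : Type u} [MetricSpace X] {ε : ℝ} (hε : 0 < ε) {D : Set X}
    (hD : ∀ x ∈ D, ∀ y ∈ D, x ≠ y → ε ≤ dist x y) : #D ≤ cellularity X := by
  set fam := (fun y => Metric.ball y (ε / 2)) '' D with hfam
  have hcell : IsCellularFamily fam := by
    constructor
    · rintro U ⟨y, hy, rfl⟩
      exact ⟨Metric.isOpen_ball, ⟨y, Metric.mem_ball_self (by linarith)⟩⟩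
    · rintro U ⟨y, hy, rfl⟩ V ⟨z, hz, rfl⟩ hUV
      have hyz : y ≠ z := fun h => hUV (by rw [h])
      refine Set.disjoint_left.mpr fun a ha ha' => ?_
      simp only [id_eq, Metric.mem_ball] at ha ha'
      have := hD y hy z hz hyz
      have : dist y z ≤ dist a y + dist a z := dist_triangle_left y z a
      linarith [hD y hy z hz hyz]
  have hinj : Set.InjOn (fun y => Metric.ball y (ε / 2)) D := by
    intro y hy z hz h
    by_contra hne
    have h' : Metric.ball y (ε / 2) = Metric.ball z (ε / 2) := h
    have hyz : y ∈ Metric.ball z (ε / 2) := by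
      rw [← h']; exact Metric.mem_ball_self (by linarith)
    rw [Metric.mem_ball] at hyz
    have := hD y hy z hz hne
    linarith
  calc #D = #fam := (mk_image_eq_of_injOn _ D hinj).symm
    _ ≤ cellularity X := cellular_family_card_le hcell

lemma mk_le_pow_cellularity {X : Type u} [MetricSpace X] :
    Cardinal.mk X ≤ (ℵ₀ * cellularity X) ^ ℵ₀ := by
  have hsep : ∀ n : ULift.{u} ℕ, ∃ D : Set X,
      (∀ x ∈ D, ∀ y ∈ D, x ≠ y → 1 / ((n.down : ℝ) + 1) ≤ dist x y) ∧
      ∀ x : X, ∃ y ∈ D, dist x y < 1 / ((n.down : ℝ) + 1) := fun n =>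
    exists_maximal_separated (by positivity)
  choose D hDsep hDnear using hsep
  have hDle : ∀ n, #(D n) ≤ cellularity X := fun n =>
    separated_card_le (by positivity) (hDsep n)
  set U := ⋃ n, D n with hU
  have hUle : #U ≤ ℵ₀ * cellularity X := by
    calc #U ≤ #(ULift.{u} ℕ) * ⨆ n, #(D n) := mk_iUnion_le D
      _ ≤ ℵ₀ * cellularity X := by
          exact mul_le_mul' (by simp) (ciSup_le' hDle)
  choose g hgD hgdist using fun (x : X) (n : ULift.{u} ℕ) => hDnear n x
  have hF : ∀ x n, g x n ∈ U := fun x n => Set.mem_iUnion.mpr ⟨n, hgD x n⟩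
  set F : X → (ULift.{u} ℕ → U) := fun x n => ⟨g x n, hF x n⟩ with hFdef
  have hFinj : Function.Injective F := by
    intro x y hxy
    have hg : ∀ n, g x n = g y n := fun n => congrArg Subtype.val (congrFun hxy n)
    by_contra hne
    have hd : 0 < dist x y := dist_pos.mpr hne
    obtain ⟨n, hn⟩ := exists_nat_gt (2 / dist x y)
    have hn1 : 2 / dist x y < (n : ℝ) + 1 := hn.trans (by linarith)
    have h2 : 2 / ((n : ℝ) + 1) < dist x y := by
      rw [div_lt_iff₀ (by positivity)]
      rw [div_lt_iff₀ hd] at hn1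
      linarith
    have h3 : dist x y ≤ dist x (g x ⟨n⟩) + dist y (g y ⟨n⟩) := by
      rw [hg ⟨n⟩]
      exact dist_triangle_right x y (g y ⟨n⟩)
    have h4 := hgdist x ⟨n⟩
    have h5 := hgdist y ⟨n⟩
    simp only at h4 h5
    have : dist x y < 2 / ((n : ℝ) + 1) := by
      calc dist x y ≤ dist x (g x ⟨n⟩) + dist y (g y ⟨n⟩) := h3
        _ < 1 / ((n : ℝ) + 1) + 1 / ((n : ℝ) + 1) := add_lt_add h4 h5
        _ = 2 / ((n : ℝ) + 1) := by ring
    linarith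
  calc #X ≤ #(ULift.{u} ℕ → U) := mk_le_of_injective hFinj
    _ = #U ^ ℵ₀ := by rw [← power_def]; congr 1 <;> simp
    _ ≤ (ℵ₀ * cellularity X) ^ ℵ₀ := power_le_power_right hUle

theorem stmt_7 {X : Type u} [TopologicalSpace X] [MetrizableSpace X]
    (h1 : Cardinal.continuum < Cardinal.mk X) (h2 : Cardinal.mk X ≤ contSuccOmega) :
    cellularity X = Cardinal.mk X := by
  letI : MetricSpace X := TopologicalSpace.metrizableSpaceMetric X
  have hcl : cellularity X ≤ #X := cellularity_le_mk X
  refine le_antisymm hcl ?_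
  by_contra hcon
  have hlt : cellularity X < #X := lt_of_not_ge fun h => hcon h
  have hX : #X ≤ (ℵ₀ * cellularity X) ^ ℵ₀ := mk_le_pow_cellularity
  set κ := cellularity X with hκ
  rcases le_or_gt κ continuum with hcase | hcase
  · have : (ℵ₀ * κ) ^ ℵ₀ ≤ continuum := by
      calc (ℵ₀ * κ) ^ ℵ₀ ≤ (continuum * continuum) ^ ℵ₀ :=
            power_le_power_right (mul_le_mul' aleph0_le_continuum hcase)
        _ = continuum ^ ℵ₀ := by rw [mul_eq_self aleph0_le_continuum]
        _ = continuum := by rw [← two_power_aleph0, ← power_mul, aleph0_mul_aleph0]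
    exact absurd (hX.trans this) (not_le.mpr h1)
  · have haleph : ℵ₀ ≤ κ := aleph0_le_continuum.trans hcase.le
    have hmul : ℵ₀ * κ = κ := by
      rw [mul_eq_max le_rfl haleph, max_eq_right haleph]
    have hκlt : κ < contSuccOmega := hlt.trans_le h2
    have hex : ∃ n : ℕ, κ ≤ (Order.succ)^[n] Cardinal.continuum := by
      by_contra hno
      push_neg at hno
      have hsup : contSuccOmega ≤ κ := ciSup_le' fun n => (hno n).le
      exact absurd hsup (not_le.mpr hκlt)
    have hspec := Nat.find_spec hex
    have hn0 : Nat.find hex ≠ 0 := by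
      intro h0
      rw [h0] at hspec
      simp only [Function.iterate_zero, id_eq] at hspec
      exact absurd hspec (not_le.mpr hcase)
    obtain ⟨m, hm⟩ := Nat.exists_eq_succ_of_ne_zero hn0
    have hmin : ¬ κ ≤ (Order.succ)^[m] Cardinal.continuum := Nat.find_min hex (by omega)
    have hle : (Order.succ)^[m + 1] Cardinal.continuum ≤ κ := by
      rw [Function.iterate_succ_apply']
      exact Order.succ_le_of_lt (not_le.mp hmin)
    have hκeq : κ = (Order.succ)^[m + 1] Cardinal.continuum :=
      le_antisymm (by rw [hm] at hspec; exact hspec) hle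
    have hpow : κ ^ ℵ₀ = κ := by
      rw [hκeq]; exact iter_power_aleph0 (m + 1)
    rw [hmul, hpow] at hX
    exact absurd hX (not_le.mpr hlt)
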